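/- arXiv:1312.4465 — 8 statements merged into one kernel-verified Lean document; each statement's English description precedes it below -/
import Mathlib

section
/- For every real x ≥ 1, the series f₁(x) := Σ_{r=1}^∞ x^{1-2r}/(2r(2r-1)) converges and equals (1/2)[x·log(1 - x^{-2}) + log((1 + x^{-1})/(1 - x^{-1}))] for x > 1. -/
/-!
Put `y = x⁻¹`, so that the `r`-th term is `y ^ (2r - 1) / (2r (2r - 1))`. For `|y| ≤ 1` it is
dominated by `1 / r ^ 2`. The partial fractions `1 / (2r (2r - 1)) = 1 / (2r - 1) - 1 / (2r)`
split the series into the `artanh` series `½ log ((1 + y) / (1 - y))` and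
`-(y⁻¹ / 2) ∑ (y ^ 2) ^ r / r = (x / 2) log (1 - y ^ 2)`.
-/

open Real

lemma zpow_one_sub_two_mul_succ {α : Type*} [DivisionMonoid α] (x : α) (n : ℕ) :
    x ^ (1 - 2 * ((n : ℤ) + 1)) = x⁻¹ ^ (2 * n + 1) := by
  rw [show 1 - 2 * ((n : ℤ) + 1) = -((2 * n + 1 : ℕ) : ℤ) by push_cast; ring,
    zpow_neg, zpow_natCast, inv_pow]

lemma summable_pow_two_mul_add_one_div_of_abs_le_one {y : ℝ} (hy : |y| ≤ 1) :
    Summable fun n : ℕ => y ^ (2 * n + 1) / (2 * ((n : ℝ) + 1) * (2 * ((n : ℝ) + 1) - 1)) := by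
  have hdom : Summable fun n : ℕ => 1 / ((n : ℝ) + 1) ^ 2 := by
    simpa using (summable_nat_add_iff 1).mpr (Real.summable_one_div_nat_pow.mpr one_lt_two)
  refine hdom.of_norm_bounded fun n => ?_
  have hden : ((n : ℝ) + 1) ^ 2 ≤ 2 * ((n : ℝ) + 1) * (2 * ((n : ℝ) + 1) - 1) := by
    nlinarith [n.cast_nonneg (α := ℝ)]
  rw [norm_div, norm_pow, Real.norm_eq_abs, Real.norm_of_nonneg ((sq_nonneg _).trans hden)]
  exact div_le_div₀ zero_le_one (pow_le_one₀ (abs_nonneg y) hy) (by positivity) hden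

lemma hasSum_pow_two_mul_add_one_div_of_abs_lt_one {y : ℝ} (hy : |y| < 1) :
    HasSum (fun n : ℕ => y ^ (2 * n + 1) / (2 * ((n : ℝ) + 1) * (2 * ((n : ℝ) + 1) - 1)))
      ((1 / 2) * (y⁻¹ * log (1 - y ^ 2) + (log (1 + y) - log (1 - y)))) := by
  have hy2 : |y ^ 2| < 1 := by
    rw [abs_pow]
    exact pow_lt_one₀ (abs_nonneg y) hy two_ne_zero
  have hsplit := ((hasSum_log_sub_log_of_abs_lt_one hy).mul_left (1 / 2)).sub
    ((hasSum_pow_div_log_of_abs_lt_one hy2).mul_left (y⁻¹ / 2))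
  have hterm : ∀ n : ℕ, 1 / 2 * (2 * (1 / (2 * (n : ℝ) + 1)) * y ^ (2 * n + 1))
      - y⁻¹ / 2 * ((y ^ 2) ^ (n + 1) / ((n : ℝ) + 1))
      = y ^ (2 * n + 1) / (2 * ((n : ℝ) + 1) * (2 * ((n : ℝ) + 1) - 1)) := by
    intro n
    have hshift : y⁻¹ * (y ^ 2) ^ (n + 1) = y ^ (2 * n + 1) := by
      rcases eq_or_ne y 0 with rfl | hy0
      · simp
      · rw [← pow_mul, show 2 * (n + 1) = 2 * n + 1 + 1 by ring, pow_succ',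
          inv_mul_cancel_left₀ hy0]
    have h1 : 2 * (n : ℝ) + 1 ≠ 0 := by positivity
    have h2 : (n : ℝ) + 1 ≠ 0 := by positivity
    have h3 : 2 * ((n : ℝ) + 1) - 1 ≠ 0 := by linarith
    rw [show y⁻¹ / 2 * ((y ^ 2) ^ (n + 1) / ((n : ℝ) + 1)) = y ^ (2 * n + 1) / (2 * ((n : ℝ) + 1))
      by rw [div_mul_div_comm, hshift]]
    field_simp
    ring
  simp only [hterm] at hsplit
  refine (congrArg (HasSum _) ?_).mp hsplit
  ring

theorem stmt_0 (x : ℝ) (hx : 1 ≤ x) :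
    Summable (fun n : ℕ =>
      x ^ (1 - 2 * ((n : ℤ) + 1)) / ((2 * ((n : ℝ) + 1)) * (2 * ((n : ℝ) + 1) - 1))) ∧
    (1 < x →
      (∑' n : ℕ,
        x ^ (1 - 2 * ((n : ℤ) + 1)) / ((2 * ((n : ℝ) + 1)) * (2 * ((n : ℝ) + 1) - 1)))
      = (1 / 2) * (x * Real.log (1 - (x⁻¹) ^ 2)
          + Real.log ((1 + x⁻¹) / (1 - x⁻¹)))) := by
  have hx0 : 0 < x := zero_lt_one.trans_le hx
  simp only [zpow_one_sub_two_mul_succ]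
  refine ⟨summable_pow_two_mul_add_one_div_of_abs_le_one ?_, fun hx1 => ?_⟩
  · rw [abs_of_pos (inv_pos.mpr hx0)]
    exact inv_le_one_of_one_le₀ hx
  have hy : |x⁻¹| < 1 := by
    rw [abs_of_pos (inv_pos.mpr hx0)]
    exact inv_lt_one_of_one_lt₀ hx1
  rw [(hasSum_pow_two_mul_add_one_div_of_abs_lt_one hy).tsum_eq, inv_inv,
    log_div (by positivity) (sub_ne_zero.mpr (inv_lt_one_of_one_lt₀ hx1).ne')]
end

section
/- For every real x > 1, the series f₂(x) := Σ_{r=2}^∞ x^{2-2r}/((2r-1)(2r-2)) converges and equals 1 - (1/2)[log(1 - x^{-2}) + x·log((1 + x^{-1})/(1 - x^{-1}))]. -/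
open Real

/-
With `y = x⁻¹` the `r`-th term is `y ^ (2r-2) / ((2r-1)(2r-2))`, and the partial fraction
`1 / ((2r-1)(2r-2)) = 1 / (2r-2) - 1 / (2r-1)` splits the series into the even part of
`-log (1 - y) = ∑ yᵐ / m`, which sums to `-log (1 - y²) / 2`, and `y⁻¹` times the odd part,
which is the tail of `artanh y = log ((1 + y) / (1 - y)) / 2` after its first term `y`.
-/

lemma hasSum_pow_two_mul_add_two_div {y : ℝ} (hy : |y| < 1) :
    HasSum (fun n : ℕ => y ^ (2 * n + 2) / (2 * (n : ℝ) + 2)) (-log (1 - y ^ 2) / 2) := by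
  have hy2 : |y ^ 2| < 1 := by
    rw [abs_pow, pow_lt_one_iff_of_nonneg (abs_nonneg y) two_ne_zero]
    exact hy
  refine ((hasSum_pow_div_log_of_abs_lt_one hy2).div_const 2).congr_fun fun n => ?_
  rw [← pow_mul, div_div]
  ring_nf

lemma hasSum_pow_two_mul_add_three_div {y : ℝ} (hy : |y| < 1) :
    HasSum (fun n : ℕ => y ^ (2 * n + 3) / (2 * (n : ℝ) + 3))
      ((log (1 + y) - log (1 - y)) / 2 - y) := by
  have htail := (hasSum_nat_add_iff' 1).mpr (hasSum_log_sub_log_of_abs_lt_one hy)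
  have h : HasSum (fun n : ℕ => y ^ (2 * n + 3) / (2 * (n : ℝ) + 3)) _ :=
    (htail.div_const 2).congr_fun fun n => by push_cast; ring_nf
  convert h using 1
  norm_num
  ring

lemma hasSum_pow_two_mul_add_two_div_mul {y : ℝ} (hy : |y| < 1) (hy0 : y ≠ 0) :
    HasSum (fun n : ℕ => y ^ (2 * n + 2) / ((2 * (n : ℝ) + 3) * (2 * n + 2)))
      (1 - (1 / 2) * (log (1 - y ^ 2) + y⁻¹ * log ((1 + y) / (1 - y)))) := by
  obtain ⟨hplus, hminus⟩ : 0 < 1 + y ∧ 0 < 1 - y := by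
    constructor <;> linarith [abs_lt.mp hy]
  have hsum : 1 - (1 / 2) * (log (1 - y ^ 2) + y⁻¹ * log ((1 + y) / (1 - y)))
      = -log (1 - y ^ 2) / 2 - y⁻¹ * ((log (1 + y) - log (1 - y)) / 2 - y) := by
    rw [log_div hplus.ne' hminus.ne']
    field_simp
    ring
  rw [hsum]
  refine ((hasSum_pow_two_mul_add_two_div hy).sub
    ((hasSum_pow_two_mul_add_three_div hy).mul_left y⁻¹)).congr_fun fun n => ?_
  have h3 : (2 * (n : ℝ) + 3) ≠ 0 := by positivity
  have h2 : (2 * (n : ℝ) + 2) ≠ 0 := by positivity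
  field_simp
  ring

theorem stmt_1 (x : ℝ) (hx : 1 < x) :
    HasSum (fun n : ℕ =>
      x ^ (2 - 2 * ((n : ℤ) + 2)) / ((2 * ((n : ℝ) + 2) - 1) * (2 * ((n : ℝ) + 2) - 2)))
      (1 - (1 / 2) * (Real.log (1 - (x⁻¹) ^ 2)
        + x * Real.log ((1 + x⁻¹) / (1 - x⁻¹)))) := by
  have hx0 : 0 < x := one_pos.trans hx
  have hy : |x⁻¹| < 1 := by
    rw [abs_of_pos (inv_pos.mpr hx0)]
    exact inv_lt_one_of_one_lt₀ hx
  have h := hasSum_pow_two_mul_add_two_div_mul hy (inv_ne_zero hx0.ne')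
  rw [inv_inv] at h
  refine h.congr_fun fun n => ?_
  have hexp : (2 : ℤ) - 2 * ((n : ℤ) + 2) = -((2 * n + 2 : ℕ) : ℤ) := by push_cast; ring
  rw [hexp, zpow_neg, zpow_natCast, inv_pow]
  ring_nf
end

section
/- For every real x > 1, the series g₁(x) := Σ_{r=2}^∞ x^{2-2r}/(r(2r-1)(2r-2)) converges and equals 3/2 - (1/2)(x² + 1)·log(1 - x^{-2}) - x·log((1 + x^{-1})/(1 - x^{-1})). -/
/-! Put `t = x⁻¹` and `r = n + 2`, so that the terms are `t ^ (2r - 2) / (r (2r - 1) (2r - 2))`.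
The partial fraction decomposition `1 / (r (2r - 1) (2r - 2)) = 1/(2r) - 2/(2r - 1) + 1/(2r - 2)`
splits the series into three tails of the logarithmic series
`-log (1 - t²) = ∑ t^(2m) / m` and `log (1 + t) - log (1 - t) = 2 ∑ t^(2m+1) / (2m + 1)`. -/

lemma one_div_mul_two_mul_sub_one_mul_two_mul_sub_two {K : Type*} [Field K] {r : K} (h₀ : r ≠ 0)
    (h₁ : 2 * r - 1 ≠ 0) (h₂ : 2 * r - 2 ≠ 0) :
    1 / (r * (2 * r - 1) * (2 * r - 2)) = 1 / (2 * r) - 2 / (2 * r - 1) + 1 / (2 * r - 2) := by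
  have two_ne : (2 : K) ≠ 0 := fun h => h₂ (by rw [h]; ring)
  rw [div_sub_div _ _ (mul_ne_zero two_ne h₀) h₁, div_add_div _ _ (by simp [*]) h₂,
    div_eq_div_iff (by simp [*]) (by simp [*])]
  ring

namespace Real

variable {t : ℝ}

lemma hasSum_pow_div_two_mul_add_two (ht : |t| < 1) (ht₀ : t ≠ 0) :
    HasSum (fun n : ℕ => t ^ (2 * n + 2) / (2 * ((n : ℝ) + 2)))
      ((-log (1 - t ^ 2) - t ^ 2) / (2 * t ^ 2)) := by
  have hsq : |t ^ 2| < 1 := by rwa [abs_pow, sq_abs, sq_lt_one_iff_abs_lt_one]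
  have h := (hasSum_nat_add_iff' 1).mpr (hasSum_pow_div_log_of_abs_lt_one hsq)
  simp only [Finset.sum_range_one, Nat.cast_zero, zero_add, pow_one, div_one] at h
  refine (h.div_const (2 * t ^ 2)).congr_fun fun n => ?_
  push_cast
  field_simp
  ring

lemma hasSum_pow_div_two_mul_add_two_sub_one (ht : |t| < 1) (ht₀ : t ≠ 0) :
    HasSum (fun n : ℕ => t ^ (2 * n + 2) / (2 * ((n : ℝ) + 2) - 1))
      ((log (1 + t) - log (1 - t) - 2 * t) / (2 * t)) := by
  have h := (hasSum_nat_add_iff' 1).mpr (hasSum_log_sub_log_of_abs_lt_one ht)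
  simp only [Finset.sum_range_one, Nat.cast_zero, mul_zero, zero_add, div_one, mul_one, pow_one] at h
  refine (h.div_const (2 * t)).congr_fun fun n => ?_
  have : 2 * ((n : ℝ) + 2) - 1 ≠ 0 := by linarith [n.cast_nonneg (α := ℝ)]
  push_cast
  field_simp
  ring

lemma hasSum_pow_div_two_mul_add_two_sub_two (ht : |t| < 1) :
    HasSum (fun n : ℕ => t ^ (2 * n + 2) / (2 * ((n : ℝ) + 2) - 2)) (-log (1 - t ^ 2) / 2) := by
  have hsq : |t ^ 2| < 1 := by rwa [abs_pow, sq_abs, sq_lt_one_iff_abs_lt_one]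
  refine ((hasSum_pow_div_log_of_abs_lt_one hsq).div_const 2).congr_fun fun n => ?_
  rw [show 2 * ((n : ℝ) + 2) - 2 = 2 * (n + 1) by ring, ← pow_mul]
  field_simp
  ring

theorem hasSum_pow_div_mul_two_mul_sub_one_mul_two_mul_sub_two (ht : |t| < 1) (ht₀ : t ≠ 0) :
    HasSum (fun n : ℕ => t ^ (2 * n + 2) /
        (((n : ℝ) + 2) * (2 * ((n : ℝ) + 2) - 1) * (2 * ((n : ℝ) + 2) - 2)))
      (3 / 2 - 1 / 2 * (t⁻¹ ^ 2 + 1) * log (1 - t ^ 2) - t⁻¹ * log ((1 + t) / (1 - t))) := by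
  have hsum := ((hasSum_pow_div_two_mul_add_two ht ht₀).sub
    ((hasSum_pow_div_two_mul_add_two_sub_one ht ht₀).mul_left 2)).add
    (hasSum_pow_div_two_mul_add_two_sub_two ht)
  obtain ⟨hlt, hgt⟩ := abs_lt.mp ht
  have hvalue : 3 / 2 - 1 / 2 * (t⁻¹ ^ 2 + 1) * log (1 - t ^ 2) - t⁻¹ * log ((1 + t) / (1 - t)) =
      (-log (1 - t ^ 2) - t ^ 2) / (2 * t ^ 2)
        - 2 * ((log (1 + t) - log (1 - t) - 2 * t) / (2 * t)) + -log (1 - t ^ 2) / 2 := by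
    rw [log_div (by linarith) (by linarith)]
    field_simp
    ring
  rw [hvalue]
  refine hsum.congr_fun fun n => ?_
  have hn : (0 : ℝ) ≤ n := n.cast_nonneg
  rw [div_eq_mul_one_div, one_div_mul_two_mul_sub_one_mul_two_mul_sub_two (by positivity)
    (by linarith) (by linarith)]
  ring

end Real

theorem stmt_2 (x : ℝ) (hx : 1 < x) :
    HasSum (fun n : ℕ =>
      x ^ (2 - 2 * ((n : ℤ) + 2)) /
        (((n : ℝ) + 2) * (2 * ((n : ℝ) + 2) - 1) * (2 * ((n : ℝ) + 2) - 2)))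
      (3 / 2 - (1 / 2) * (x ^ 2 + 1) * Real.log (1 - (x⁻¹) ^ 2)
        - x * Real.log ((1 + x⁻¹) / (1 - x⁻¹))) := by
  have hx₀ : x ≠ 0 := by positivity
  have habs : |x⁻¹| < 1 := by
    rw [abs_inv]; exact inv_lt_one_of_one_lt₀ (hx.trans_le (le_abs_self x))
  have h := Real.hasSum_pow_div_mul_two_mul_sub_one_mul_two_mul_sub_two habs (inv_ne_zero hx₀)
  rw [inv_inv] at h
  refine h.congr_fun fun n => ?_
  rw [show (2 : ℤ) - 2 * ((n : ℤ) + 2) = -((2 * n + 2 : ℕ) : ℤ) by push_cast; ring, zpow_neg,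
    zpow_natCast, inv_pow]
end

section
/- For every real x > 1, the series g₂(x) := Σ_{r=1}^∞ x^{1-2r}/((2r+1)·r·(2r-1)) converges and equals -x + x·log(1 - x^{-2}) + (1/2)(x² + 1)·log((1 + x^{-1})/(1 - x^{-1})). -/
/-!
With `y = x⁻¹` and `r = n + 1`, the partial fractions
`1 / ((2r+1) r (2r-1)) = 1 / (2r-1) - 1 / r + 1 / (2r+1)` split the series into the series
`∑ y^(2r-1)/(2r-1) = artanh y`, `x` times `∑ y^(2r)/r = -log (1 - y²)`, and `x²` times the tail
`∑ y^(2r+1)/(2r+1) = artanh y - y`.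
-/

open Real

lemma one_div_mul_mul_eq_partialFractions {r : ℝ} (hr : r ≠ 0) (hplus : 2 * r + 1 ≠ 0)
    (hminus : 2 * r - 1 ≠ 0) :
    1 / ((2 * r + 1) * r * (2 * r - 1)) = 1 / (2 * r - 1) - 1 / r + 1 / (2 * r + 1) := by
  field_simp
  ring

lemma hasSum_pow_odd_div {y : ℝ} (hy : |y| < 1) :
    HasSum (fun k : ℕ => y ^ (2 * k + 1) / (2 * k + 1)) (1 / 2 * log ((1 + y) / (1 - y))) := by
  obtain ⟨hy_neg, hy_lt⟩ := abs_lt.mp hy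
  rw [log_div (by linarith) (by linarith)]
  refine ((hasSum_log_sub_log_of_abs_lt_one hy).mul_left (1 / 2)).congr_fun fun k => ?_
  ring

lemma hasSum_pow_odd_div_succ {y : ℝ} (hy : |y| < 1) :
    HasSum (fun k : ℕ => y ^ (2 * (k + 1) + 1) / (2 * ((k : ℝ) + 1) + 1))
      (1 / 2 * log ((1 + y) / (1 - y)) - y) := by
  have h := (hasSum_nat_add_iff' 1).mpr (hasSum_pow_odd_div hy)
  simpa using h

lemma hasSum_pow_sq_div {y : ℝ} (hy : |y| < 1) :
    HasSum (fun n : ℕ => (y ^ 2) ^ (n + 1) / (n + 1)) (-log (1 - y ^ 2)) := by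
  have : |y ^ 2| < 1 := by rw [abs_pow]; exact pow_lt_one₀ (abs_nonneg y) hy two_ne_zero
  simpa using hasSum_pow_div_log_of_abs_lt_one this

lemma zpow_div_eq_partialFractions {x : ℝ} (hx : x ≠ 0) (n : ℕ) :
    x ^ (1 - 2 * ((n : ℤ) + 1)) /
        ((2 * ((n : ℝ) + 1) + 1) * ((n : ℝ) + 1) * (2 * ((n : ℝ) + 1) - 1)) =
      x⁻¹ ^ (2 * n + 1) / (2 * n + 1) - x * ((x⁻¹ ^ 2) ^ (n + 1) / (n + 1))
        + x ^ 2 * (x⁻¹ ^ (2 * (n + 1) + 1) / (2 * ((n : ℝ) + 1) + 1)) := by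
  have hpow : x ^ (1 - 2 * ((n : ℤ) + 1)) = x⁻¹ ^ (2 * n + 1) := by
    rw [inv_pow, ← zpow_natCast, ← zpow_neg]
    push_cast
    ring_nf
  have hr : ((n : ℝ) + 1) ≠ 0 := by positivity
  have hminus : 2 * ((n : ℝ) + 1) - 1 ≠ 0 := by
    have : (0 : ℝ) ≤ n := n.cast_nonneg
    linarith
  rw [hpow, div_eq_mul_one_div,
    one_div_mul_mul_eq_partialFractions hr (by positivity) hminus]
  -- `x * x⁻¹ = 1` turns all three powers of `x⁻¹` into `x⁻¹ ^ (2 * n + 1)`.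
  linear_combination x⁻¹ ^ (2 * n + 1) * (1 / (n + 1) - (x * x⁻¹ + 1) / (2 * (n + 1) + 1)) *
    mul_inv_cancel₀ hx

theorem stmt_3 (x : ℝ) (hx : 1 < x) :
    HasSum (fun n : ℕ =>
      x ^ (1 - 2 * ((n : ℤ) + 1)) /
        ((2 * ((n : ℝ) + 1) + 1) * ((n : ℝ) + 1) * (2 * ((n : ℝ) + 1) - 1)))
      (-x + x * Real.log (1 - (x⁻¹) ^ 2)
        + (1 / 2) * (x ^ 2 + 1) * Real.log ((1 + x⁻¹) / (1 - x⁻¹))) := by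
  have hx0 : x ≠ 0 := by positivity
  have hy : |x⁻¹| < 1 := by
    rw [abs_inv, abs_of_pos (by positivity)]
    exact inv_lt_one_of_one_lt₀ hx
  have hsum := ((hasSum_pow_odd_div hy).sub ((hasSum_pow_sq_div hy).mul_left x)).add
    ((hasSum_pow_odd_div_succ hy).mul_left (x ^ 2))
  have hvalue : -x + x * log (1 - x⁻¹ ^ 2) + 1 / 2 * (x ^ 2 + 1) * log ((1 + x⁻¹) / (1 - x⁻¹)) =
      1 / 2 * log ((1 + x⁻¹) / (1 - x⁻¹)) - x * -log (1 - x⁻¹ ^ 2)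
        + x ^ 2 * (1 / 2 * log ((1 + x⁻¹) / (1 - x⁻¹)) - x⁻¹) := by
    linear_combination x * mul_inv_cancel₀ hx0
  rw [hvalue]
  exact hsum.congr_fun (zpow_div_eq_partialFractions hx0)
end

section
/- For every real x ≥ 3, the function f₂(x) := Σ_{r=2}^∞ x^{2-2r}/((2r-1)(2r-2)) satisfies 0 < f₂(x) ≤ 0.2/x². -/
/-!
With `y = x⁻²` the `n`-th term is `y ^ (n + 1) / ((2n + 3)(2n + 2))`, which is positive and at most
`y ^ (n + 1) / 6`. Summing the geometric majorant gives `f₂(x) ≤ y / (6 (1 - y)) = 1 / (6 (x² - 1))`,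
and `1 / (6 (x² - 1)) ≤ 0.2 / x²` as soon as `x² ≥ 6`.
-/

/-- The term of index `r = n + 2` of the series `f₂`. -/
noncomputable def f₂Term (x : ℝ) (n : ℕ) : ℝ :=
  x ^ (2 - 2 * ((n : ℤ) + 2)) / ((2 * ((n : ℝ) + 2) - 1) * (2 * ((n : ℝ) + 2) - 2))

lemma f₂Term_eq (x : ℝ) (n : ℕ) :
    f₂Term x n = (x ^ 2)⁻¹ ^ (n + 1) / ((2 * n + 3) * (2 * n + 2)) := by
  have hexp : (2 - 2 * ((n : ℤ) + 2)) = -((2 * (n + 1) : ℕ) : ℤ) := by push_cast; ring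
  rw [f₂Term, hexp, zpow_neg, zpow_natCast, pow_mul, inv_pow]
  ring_nf

lemma f₂Term_pos {x : ℝ} (hx : x ≠ 0) (n : ℕ) : 0 < f₂Term x n := by
  rw [f₂Term_eq]
  positivity

lemma f₂Term_le (x : ℝ) (n : ℕ) : f₂Term x n ≤ (x ^ 2)⁻¹ ^ (n + 1) / 6 := by
  rw [f₂Term_eq]
  gcongr
  nlinarith [n.cast_nonneg (α := ℝ)]

lemma hasSum_pow_succ_div_six {y : ℝ} (hy₀ : 0 ≤ y) (hy₁ : y < 1) :
    HasSum (fun n : ℕ => y ^ (n + 1) / 6) (y / (6 * (1 - y))) := by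
  have hval : y / (6 * (1 - y)) = y / 6 * (1 - y)⁻¹ := by field_simp
  have hterm : (fun n : ℕ => y ^ (n + 1) / 6) = fun n => y / 6 * y ^ n := by
    funext n
    ring
  rw [hval, hterm]
  exact (hasSum_geometric_of_lt_one hy₀ hy₁).mul_left (y / 6)

section

variable {x : ℝ}

lemma hasSum_inv_sq_pow_succ_div_six (hx : 1 < |x|) :
    HasSum (fun n : ℕ => (x ^ 2)⁻¹ ^ (n + 1) / 6) (1 / (6 * (x ^ 2 - 1))) := by
  have hx0 : x ≠ 0 := abs_pos.1 (one_pos.trans hx)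
  have hx2 : 1 < x ^ 2 := one_lt_sq_iff_one_lt_abs x |>.2 hx
  convert hasSum_pow_succ_div_six (inv_nonneg.2 (sq_nonneg x)) (inv_lt_one_of_one_lt₀ hx2) using 1
  field_simp

lemma summable_f₂Term (hx : 1 < |x|) : Summable (f₂Term x) :=
  (hasSum_inv_sq_pow_succ_div_six hx).summable.of_nonneg_of_le
    (fun n => (f₂Term_pos (abs_pos.1 (one_pos.trans hx)) n).le) (f₂Term_le x)

lemma tsum_f₂Term_pos (hx : 1 < |x|) : 0 < ∑' n, f₂Term x n := by
  have hpos := f₂Term_pos (abs_pos.1 (one_pos.trans hx))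
  exact (summable_f₂Term hx).tsum_pos (fun n => (hpos n).le) 0 (hpos 0)

lemma tsum_f₂Term_le (hx : 1 < |x|) : ∑' n, f₂Term x n ≤ 1 / (6 * (x ^ 2 - 1)) := by
  have hmaj := hasSum_inv_sq_pow_succ_div_six hx
  exact ((summable_f₂Term hx).tsum_le_tsum (f₂Term_le x) hmaj.summable).trans_eq hmaj.tsum_eq

end

theorem stmt_5 (x : ℝ) (hx : 3 ≤ x) :
    0 < (∑' n : ℕ,
        x ^ (2 - 2 * ((n : ℤ) + 2)) / ((2 * ((n : ℝ) + 2) - 1) * (2 * ((n : ℝ) + 2) - 2))) ∧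
    (∑' n : ℕ,
        x ^ (2 - 2 * ((n : ℤ) + 2)) / ((2 * ((n : ℝ) + 2) - 1) * (2 * ((n : ℝ) + 2) - 2)))
      ≤ 0.2 / x ^ 2 := by
  have hx1 : 1 < |x| := by rw [abs_of_nonneg (by linarith)]; linarith
  refine ⟨tsum_f₂Term_pos hx1, (tsum_f₂Term_le hx1).trans ?_⟩
  rw [div_le_div_iff₀ (by nlinarith) (by positivity)]
  nlinarith
end

section
/- For every real x ≥ 3, the function g₁(x) := Σ_{r=2}^∞ x^{2-2r}/(r(2r-1)(2r-2)) satisfies 0 < g₁(x) ≤ 0.1/x². -/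
/-!
With `r = x⁻²` the `n`-th term is `r ^ (n + 1)` divided by a cubic in `n` that is at least `12`,
so the series is dominated by the geometric series `∑ r ^ (n + 1) / 12 = 1 / (12 (x² - 1))`,
which is at most `0.1 / x²` as soon as `x² ≥ 6`. Positivity comes from the first term.
-/

namespace G1Series

/-- The term of index `r = n + 2` of the series `g₁(x)`. -/
noncomputable def term (x : ℝ) (n : ℕ) : ℝ :=
  x ^ (2 - 2 * ((n : ℤ) + 2)) /
    (((n : ℝ) + 2) * (2 * ((n : ℝ) + 2) - 1) * (2 * ((n : ℝ) + 2) - 2))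

lemma twelve_le_denom (n : ℕ) :
    (12 : ℝ) ≤ ((n : ℝ) + 2) * (2 * ((n : ℝ) + 2) - 1) * (2 * ((n : ℝ) + 2) - 2) := by
  have hn : (0 : ℝ) ≤ n := n.cast_nonneg
  nlinarith [mul_nonneg (mul_nonneg hn hn) hn]

lemma zpow_exponent_eq (x : ℝ) (n : ℕ) :
    x ^ (2 - 2 * ((n : ℤ) + 2)) = (x ^ 2)⁻¹ ^ (n + 1) := by
  have h : 2 - 2 * ((n : ℤ) + 2) = -((2 * (n + 1) : ℕ) : ℤ) := by push_cast; ring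
  rw [h, zpow_neg, zpow_natCast, pow_mul, ← inv_pow]

lemma term_eq (x : ℝ) (n : ℕ) :
    term x n = (x ^ 2)⁻¹ ^ (n + 1) /
      (((n : ℝ) + 2) * (2 * ((n : ℝ) + 2) - 1) * (2 * ((n : ℝ) + 2) - 2)) := by
  rw [term, zpow_exponent_eq]

lemma term_nonneg (x : ℝ) (n : ℕ) : 0 ≤ term x n := by
  rw [term_eq]
  exact div_nonneg (by positivity) (by linarith [twelve_le_denom n])

lemma term_pos {x : ℝ} (hx : x ≠ 0) (n : ℕ) : 0 < term x n := by
  rw [term_eq]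
  exact div_pos (by positivity) (by linarith [twelve_le_denom n])

lemma term_le_geometric (x : ℝ) (n : ℕ) : term x n ≤ (x ^ 2)⁻¹ ^ (n + 1) / 12 := by
  rw [term_eq]
  exact div_le_div_of_nonneg_left (by positivity) (by norm_num) (twelve_le_denom n)

lemma hasSum_geometric_succ_div {r : ℝ} (h₀ : 0 ≤ r) (h₁ : r < 1) (c : ℝ) :
    HasSum (fun n : ℕ ↦ r ^ (n + 1) / c) (r * (1 - r)⁻¹ / c) := by
  simpa only [pow_succ', mul_div_assoc] using
    ((hasSum_geometric_of_lt_one h₀ h₁).mul_left r).div_const c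

lemma summable_term {x : ℝ} (hx : 1 < x ^ 2) : Summable (term x) :=
  have h₁ : (x ^ 2)⁻¹ < 1 := inv_lt_one_of_one_lt₀ hx
  (hasSum_geometric_succ_div (by positivity) h₁ 12).summable.of_nonneg_of_le
    (term_nonneg x) (term_le_geometric x)

lemma tsum_term_le {x : ℝ} (hx : 1 < x ^ 2) : ∑' n, term x n ≤ 1 / (12 * (x ^ 2 - 1)) := by
  have h₁ : (x ^ 2)⁻¹ < 1 := inv_lt_one_of_one_lt₀ hx
  have hgeom := hasSum_geometric_succ_div (by positivity) h₁ 12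
  calc ∑' n, term x n ≤ (x ^ 2)⁻¹ * (1 - (x ^ 2)⁻¹)⁻¹ / 12 :=
        hasSum_le (term_le_geometric x) (summable_term hx).hasSum hgeom
    _ = 1 / (12 * (x ^ 2 - 1)) := by
        have hx₀ : x ^ 2 ≠ 0 := by linarith
        rw [← mul_inv, mul_one_sub, mul_inv_cancel₀ hx₀, one_div, mul_inv]
        ring

end G1Series

theorem stmt_6 (x : ℝ) (hx : 3 ≤ x) :
    0 < (∑' n : ℕ,
        x ^ (2 - 2 * ((n : ℤ) + 2)) /
          (((n : ℝ) + 2) * (2 * ((n : ℝ) + 2) - 1) * (2 * ((n : ℝ) + 2) - 2))) ∧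
    (∑' n : ℕ,
        x ^ (2 - 2 * ((n : ℤ) + 2)) /
          (((n : ℝ) + 2) * (2 * ((n : ℝ) + 2) - 1) * (2 * ((n : ℝ) + 2) - 2)))
      ≤ 0.1 / x ^ 2 := by
  have hx2 : 9 ≤ x ^ 2 := by nlinarith
  have hsum : Summable (G1Series.term x) := G1Series.summable_term (by linarith)
  refine ⟨hsum.tsum_pos (G1Series.term_nonneg x) 0 (G1Series.term_pos (by positivity) 0), ?_⟩
  calc ∑' n, G1Series.term x n ≤ 1 / (12 * (x ^ 2 - 1)) := G1Series.tsum_term_le (by linarith)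
    _ ≤ 0.1 / x ^ 2 := by
        rw [div_le_div_iff₀ (by linarith) (by linarith)]
        linarith
end

section
/- Let f(x) := 1/(x·log x) and let E₁(u) := ∫_1^∞ e^{-ut}/t dt be the exponential integral. For every real N ≥ 3, with y := 1/log N, one has ∫_N^∞ x^{3/2}·f''(x) dx = ((5/2)y + y²)/√N + (3/4)·E₁((1/2)·log N). -/
/-!
Write `L = log x`. A direct computation gives `f''(x) = (2L² + 3L + 2) / (x³L³)`, so
`x^{3/2} f''(x) = x^{-3/2} (2/L + 3/L² + 2/L³)`. All of this except `(3/4) x^{-3/2}/L` is the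
derivative of the elementary function `G(x) = -(5/(2L) + 1/L²) x^{-1/2}`, which tends to `0` at
infinity, so that part integrates to `-G(N)`. The remaining term becomes `(3/4) E₁((log N)/2)`
after the substitution `x = N^t`.
-/

open Real Set MeasureTheory Filter Topology

theorem hasDerivAt_one_div_mul_log {x : ℝ} (hx : x ≠ 0) (hlog : log x ≠ 0) :
    HasDerivAt (fun y => 1 / (y * log y)) (-(log x + 1) / (x * log x) ^ 2) x := by
  simpa only [one_div] using (hasDerivAt_mul_log hx).fun_inv (mul_ne_zero hx hlog)

theorem deriv_deriv_one_div_mul_log {x : ℝ} (hx : x ≠ 0) (hlog : log x ≠ 0) :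
    deriv (deriv fun y => 1 / (y * log y)) x
      = (2 * log x ^ 2 + 3 * log x + 2) / (x ^ 3 * log x ^ 3) := by
  have hderiv : deriv (fun y => 1 / (y * log y)) =ᶠ[𝓝 x]
      fun y => -(log y + 1) / (y * log y) ^ 2 := by
    filter_upwards [isOpen_ne.mem_nhds hx, (continuousAt_log hx).eventually_ne hlog]
      with y hy hly
    exact (hasDerivAt_one_div_mul_log hy hly).deriv
  have h := ((hasDerivAt_log hx).add_const 1).fun_neg.fun_div ((hasDerivAt_mul_log hx).fun_pow 2)
    (pow_ne_zero 2 (mul_ne_zero hx hlog))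
  rw [hderiv.deriv_eq, h.deriv]
  field_simp
  ring

noncomputable def elementaryPart (x : ℝ) : ℝ :=
  -(5 / 2 / log x + 1 / log x ^ 2) * x ^ (-(1 / 2) : ℝ)

noncomputable def elementaryPartDeriv (x : ℝ) : ℝ :=
  (5 / 4 / log x + 3 / log x ^ 2 + 2 / log x ^ 3) * x ^ (-(3 / 2) : ℝ)

theorem rpow_three_halves_mul_deriv_deriv_one_div_mul_log {x : ℝ} (hx : 0 < x)
    (hlog : log x ≠ 0) :
    x ^ ((3 : ℝ) / 2) * deriv (deriv fun y => 1 / (y * log y)) x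
      = elementaryPartDeriv x + 3 / 4 * (x ^ (-(1 / 2) - 1 : ℝ) / log x) := by
  have hsplit : x ^ ((3 : ℝ) / 2) = x ^ (-(3 / 2) : ℝ) * x ^ 3 := by
    rw [← rpow_natCast, ← rpow_add hx]
    norm_num
  rw [deriv_deriv_one_div_mul_log hx.ne' hlog, elementaryPartDeriv, hsplit,
    show (-(1 / 2) - 1 : ℝ) = -(3 / 2) by norm_num]
  field_simp
  ring

theorem hasDerivAt_elementaryPart {x : ℝ} (hx : x ≠ 0) (hlog : log x ≠ 0) :
    HasDerivAt elementaryPart (elementaryPartDeriv x) x := by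
  have hcoef := (((hasDerivAt_const x (5 / 2 : ℝ)).fun_div (hasDerivAt_log hx) hlog).fun_add
    ((hasDerivAt_const x (1 : ℝ)).fun_div ((hasDerivAt_log hx).fun_pow 2)
      (pow_ne_zero 2 hlog))).fun_neg
  refine (hcoef.fun_mul (hasDerivAt_rpow_const (p := -(1 / 2)) (Or.inl hx))).congr_deriv ?_
  unfold elementaryPartDeriv
  rw [show (-(3 / 2) : ℝ) = -(1 / 2) - 1 by norm_num, rpow_sub_one hx]
  field_simp
  ring

theorem tendsto_elementaryPart_atTop : Tendsto elementaryPart atTop (𝓝 0) := by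
  have h1 : Tendsto (fun x => 5 / 2 / log x) atTop (𝓝 0) :=
    tendsto_const_nhds.div_atTop tendsto_log_atTop
  have h2 : Tendsto (fun x => 1 / log x ^ 2) atTop (𝓝 0) :=
    tendsto_const_nhds.div_atTop ((tendsto_pow_atTop two_ne_zero).comp tendsto_log_atTop)
  have h3 : Tendsto (fun x : ℝ => x ^ (-(1 / 2) : ℝ)) atTop (𝓝 0) :=
    tendsto_rpow_neg_atTop one_half_pos
  unfold elementaryPart
  simpa using ((h1.add h2).neg).mul h3

theorem elementaryPartDeriv_nonneg {x : ℝ} (hx : 1 < x) : 0 ≤ elementaryPartDeriv x := by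
  have := log_pos hx
  unfold elementaryPartDeriv
  positivity

theorem hasDerivAt_elementaryPart_of_one_lt {x : ℝ} (hx : 1 < x) :
    HasDerivAt elementaryPart (elementaryPartDeriv x) x :=
  hasDerivAt_elementaryPart (by linarith) (log_pos hx).ne'

theorem integrableOn_Ioi_elementaryPartDeriv {N : ℝ} (hN : 1 < N) :
    IntegrableOn elementaryPartDeriv (Ioi N) :=
  integrableOn_Ioi_deriv_of_nonneg'
    (fun _ hx => hasDerivAt_elementaryPart_of_one_lt (hN.trans_le hx.out))
    (fun _ hx => elementaryPartDeriv_nonneg (hN.trans hx)) tendsto_elementaryPart_atTop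

theorem integral_Ioi_elementaryPartDeriv {N : ℝ} (hN : 1 < N) :
    ∫ x in Ioi N, elementaryPartDeriv x = -elementaryPart N := by
  rw [integral_Ioi_of_hasDerivAt_of_nonneg'
    (fun _ hx => hasDerivAt_elementaryPart_of_one_lt (hN.trans_le hx.out))
    (fun _ hx => elementaryPartDeriv_nonneg (hN.trans hx)) tendsto_elementaryPart_atTop, zero_sub]

theorem integrableOn_Ioi_rpow_div_log {N s : ℝ} (hN : 1 < N) (hs : 0 < s) :
    IntegrableOn (fun x => x ^ (-s - 1) / log x) (Ioi N) := by
  refine ((integrableOn_Ioi_rpow_of_lt (a := -s - 1) (by linarith) (by linarith)).div_const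
    (log N)).mono' (by fun_prop : Measurable fun x => x ^ (-s - 1) / log x).aestronglyMeasurable ?_
  filter_upwards [ae_restrict_mem measurableSet_Ioi] with x hx
  have hlogN := log_pos hN
  have hlog : log N < log x := log_lt_log (by linarith) hx
  rw [norm_div, norm_of_nonneg (rpow_nonneg (by linarith [hx.out]) _),
    norm_of_nonneg (by linarith)]
  gcongr
  exact rpow_nonneg (by linarith [hx.out]) _

theorem integral_Ioi_rpow_div_log {N : ℝ} (hN : 1 < N) (s : ℝ) :
    ∫ x in Ioi N, x ^ (-s - 1) / log x = ∫ t in Ioi (1 : ℝ), exp (-(s * log N) * t) / t := by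
  set a := log N
  have ha : 0 < a := log_pos hN
  have hexp : ∫ x in Ioi N, x ^ (-s - 1) / log x = ∫ u in Ioi a, exp (-s * u) / u := by
    rw [← exp_log (by linarith : 0 < N), ← integral_comp_exp_Ioi]
    refine setIntegral_congr_fun measurableSet_Ioi fun u _ => ?_
    rw [smul_eq_mul, log_exp, ← exp_mul, mul_div_assoc', ← exp_add]
    ring_nf
  have hscale := integral_comp_mul_left_Ioi' (fun u => exp (-s * u) / u) 1 ha
  rw [mul_one] at hscale
  rw [hexp, ← hscale, smul_eq_mul, ← integral_const_mul]
  congr 1 with t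
  rw [mul_div_assoc', mul_div_mul_left _ _ ha.ne']
  ring_nf

theorem stmt_15 (N : ℝ) (hN : 3 ≤ N) :
    let f : ℝ → ℝ := fun x => 1 / (x * Real.log x)
    let E₁ : ℝ → ℝ := fun u => ∫ t in Set.Ioi (1 : ℝ), Real.exp (-u * t) / t
    let y : ℝ := 1 / Real.log N
    (∫ x in Set.Ioi N, x ^ ((3 : ℝ) / 2) * deriv (deriv f) x)
      = ((5 / 2) * y + y ^ 2) / Real.sqrt N + (3 / 4) * E₁ ((1 / 2) * Real.log N) := by
  intro f E₁ y
  have hN1 : 1 < N := by linarith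
  have hsplit : ∀ x ∈ Ioi N, x ^ ((3 : ℝ) / 2) * deriv (deriv f) x
      = elementaryPartDeriv x + 3 / 4 * (x ^ (-(1 / 2) - 1 : ℝ) / log x) := fun x hx =>
    rpow_three_halves_mul_deriv_deriv_one_div_mul_log (by linarith [hx.out])
      (log_pos (hN1.trans hx)).ne'
  rw [setIntegral_congr_fun measurableSet_Ioi hsplit,
    integral_add (integrableOn_Ioi_elementaryPartDeriv hN1)
      ((integrableOn_Ioi_rpow_div_log hN1 one_half_pos).const_mul _),
    integral_const_mul, integral_Ioi_elementaryPartDeriv hN1, integral_Ioi_rpow_div_log hN1,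
    elementaryPart, rpow_neg (by linarith), ← sqrt_eq_rpow]
  ring
end

section
/- Let f(x) := 1/(x·log x) and E₁(u) := ∫_1^∞ e^{-ut}/t dt. For every real N ≥ 3, with y := 1/log N, one has ∫_N^∞ x^{5/2}·f'''(x) dx = -((33/4)y + (11/2)y² + 2y³)/√N - (15/8)·E₁((1/2)·log N). -/
/-!
Write `L = log x`. Three differentiations give `f''' x = -(6L³ + 11L² + 12L + 6) / (xL)⁴`, so
`x^(5/2) f''' x = P' x - (15/8) x^(-1/2) f x` with `P x = ((33/4)/L + (11/2)/L² + 2/L³) / √x`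
(`boundaryTerm`). As `P' ≤ 0` on `(1, ∞)` and `P → 0`, `P'` is integrable with integral `-P N`;
the substitution `x = N ^ t` turns `∫_N^∞ x^(-1/2) f x dx` into `E₁ (log N / 2)`.
-/

open Real Set MeasureTheory Filter Topology

lemma hasDerivAt_div_mul_log_pow {p : ℝ → ℝ} {p' x : ℝ} (n : ℕ)
    (hp : HasDerivAt p p' (log x)) (hl : log x ≠ 0) :
    HasDerivAt (fun x => p (log x) / (x * log x) ^ (n + 1))
      ((p' * log x - (n + 1) * (log x + 1) * p (log x)) / (x * log x) ^ (n + 2)) x := by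
  have hx : x ≠ 0 := by rintro rfl; simp at hl
  have hnum := hp.comp x (hasDerivAt_log hx)
  have hden := (hasDerivAt_mul_log hx).pow (n + 1)
  refine (hnum.div hden (pow_ne_zero _ (mul_ne_zero hx hl))).congr_deriv ?_
  simp only [Function.comp_apply, Pi.pow_apply, Nat.add_sub_cancel, Nat.cast_add, Nat.cast_one]
  field_simp
  ring

lemma isOpen_setOf_log_ne_zero : IsOpen {x : ℝ | log x ≠ 0} :=
  isOpen_iff_mem_nhds.2 fun x hx =>
    (continuousAt_log fun h => hx (by simp [h])).eventually_ne hx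

lemma deriv_deriv_deriv_one_div_mul_log {x : ℝ} (hl : log x ≠ 0) :
    deriv (deriv (deriv fun x => 1 / (x * log x))) x =
      -(6 * log x ^ 3 + 11 * log x ^ 2 + 12 * log x + 6) / (x * log x) ^ 4 := by
  have hderiv : EqOn (deriv fun x => 1 / (x * log x)) (fun x => -(log x + 1) / (x * log x) ^ 2)
      {x | log x ≠ 0} := fun x hx => by
    have := hasDerivAt_div_mul_log_pow 0 (hasDerivAt_const (log x) (1 : ℝ)) hx
    simp only [zero_add, pow_one] at this
    exact this.deriv.trans (by ring)
  have hderiv2 : EqOn (deriv (deriv fun x => 1 / (x * log x)))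
      (fun x => (2 * log x ^ 2 + 3 * log x + 2) / (x * log x) ^ 3) {x | log x ≠ 0} :=
    fun x hx => by
    have hp : HasDerivAt (fun L => -(L + 1)) (-1) (log x) :=
      ((hasDerivAt_id (log x)).add_const 1).neg
    rw [hderiv.deriv isOpen_setOf_log_ne_zero hx]
    refine (hasDerivAt_div_mul_log_pow 1 hp hx).deriv.trans ?_
    push_cast
    ring
  rw [hderiv2.deriv isOpen_setOf_log_ne_zero hl]
  have hp : HasDerivAt (fun L => 2 * L ^ 2 + 3 * L + 2) (4 * log x + 3) (log x) :=
    ((((hasDerivAt_pow 2 (log x)).const_mul 2).add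
      ((hasDerivAt_id (log x)).const_mul 3)).add_const 2).congr_deriv (by norm_num; ring)
  refine (hasDerivAt_div_mul_log_pow 2 hp hl).deriv.trans ?_
  push_cast
  ring

noncomputable def boundaryTerm (x : ℝ) : ℝ :=
  ((33 / 4) * (1 / log x) + (11 / 2) * (1 / log x) ^ 2 + 2 * (1 / log x) ^ 3) / √x

noncomputable def boundaryTermDeriv (x : ℝ) : ℝ :=
  -((33 / 8) * log x ^ 3 + 11 * log x ^ 2 + 12 * log x + 6) / (log x ^ 4 * x * √x)

lemma hasDerivAt_boundaryTerm {x : ℝ} (hx : 0 < x) (hl : log x ≠ 0) :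
    HasDerivAt boundaryTerm (boundaryTermDeriv x) x := by
  have hy := (hasDerivAt_const x (1 : ℝ)).div (hasDerivAt_log hx.ne') hl
  have hnum := ((hy.const_mul (33 / 4)).add ((hy.pow 2).const_mul (11 / 2))).add
    ((hy.pow 3).const_mul 2)
  have hs : √x ≠ 0 := (sqrt_pos.2 hx).ne'
  refine (hnum.div (hasDerivAt_sqrt hx.ne') hs).congr_deriv ?_
  norm_num [boundaryTermDeriv]
  field_simp
  rw [sq_sqrt hx.le]
  ring

lemma boundaryTermDeriv_nonpos {x : ℝ} (hx : 1 < x) : boundaryTermDeriv x ≤ 0 := by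
  have := log_pos hx
  have : 0 < x := by linarith
  unfold boundaryTermDeriv
  rw [neg_div]
  exact neg_nonpos.2 (by positivity)

lemma tendsto_boundaryTerm_atTop : Tendsto boundaryTerm atTop (𝓝 0) := by
  have hy : Tendsto (fun x => 1 / log x) atTop (𝓝 0) :=
    tendsto_const_nhds.div_atTop tendsto_log_atTop
  have hnum := ((hy.const_mul (33 / 4)).add ((hy.pow 2).const_mul (11 / 2))).add
    ((hy.pow 3).const_mul 2)
  unfold boundaryTerm
  simpa using hnum.div_atTop tendsto_sqrt_atTop

lemma hasDerivAt_boundaryTerm_of_one_lt {x : ℝ} (hx : 1 < x) :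
    HasDerivAt boundaryTerm (boundaryTermDeriv x) x :=
  hasDerivAt_boundaryTerm (by linarith) (log_pos hx).ne'

lemma integrableOn_boundaryTermDeriv {a : ℝ} (ha : 1 < a) :
    IntegrableOn boundaryTermDeriv (Ioi a) :=
  integrableOn_Ioi_deriv_of_nonpos'
    (fun _ hx => hasDerivAt_boundaryTerm_of_one_lt (ha.trans_le hx))
    (fun _ hx => boundaryTermDeriv_nonpos (ha.trans hx)) tendsto_boundaryTerm_atTop

lemma integral_Ioi_boundaryTermDeriv {a : ℝ} (ha : 1 < a) :
    ∫ x in Ioi a, boundaryTermDeriv x = -boundaryTerm a := by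
  simpa using integral_Ioi_of_hasDerivAt_of_nonpos'
    (fun _ hx => hasDerivAt_boundaryTerm_of_one_lt (ha.trans_le hx))
    (fun _ hx => boundaryTermDeriv_nonpos (ha.trans hx)) tendsto_boundaryTerm_atTop

lemma rpow_mul_deriv_deriv_deriv_one_div_mul_log {x : ℝ} (hx : 0 < x) (hl : log x ≠ 0) :
    x ^ ((5 : ℝ) / 2) * deriv (deriv (deriv fun x => 1 / (x * log x))) x =
      boundaryTermDeriv x - 15 / 8 * (x ^ (-(1 / 2) : ℝ) / (x * log x)) := by
  have hfive_halves : x ^ ((5 : ℝ) / 2) = x ^ 2 * √x := by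
    rw [sqrt_eq_rpow, ← rpow_two, ← rpow_add hx]
    norm_num
  have hneg_half : x ^ (-(1 / 2) : ℝ) = (√x)⁻¹ := by
    rw [sqrt_eq_rpow, rpow_neg hx.le]
  have hs : √x ≠ 0 := (sqrt_pos.2 hx).ne'
  rw [deriv_deriv_deriv_one_div_mul_log hl, boundaryTermDeriv, hfive_halves, hneg_half]
  field_simp
  rw [sq_sqrt hx.le]
  ring

lemma integral_rpow_neg_div_mul_log_Ioi (s : ℝ) {a : ℝ} (ha : 1 < a) :
    ∫ x in Ioi a, x ^ (-s) / (x * log x) = ∫ t in Ioi 1, exp (-(s * log a) * t) / t := by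
  have hL : 0 < log a := log_pos ha
  calc ∫ x in Ioi a, x ^ (-s) / (x * log x)
      = ∫ x in Ioi a, x⁻¹ • (exp (-s * log x) / log x) := by
        refine setIntegral_congr_fun measurableSet_Ioi fun x hx => ?_
        rw [rpow_def_of_pos (by linarith [mem_Ioi.1 hx]), smul_eq_mul]
        ring_nf
    _ = ∫ y in Ioi (log a), exp (-s * y) / y :=
        integral_comp_log_Ioi (fun y => exp (-s * y) / y) (zero_lt_one.trans ha)
    _ = ∫ t in Ioi 1, exp (-(s * log a) * t) / t := by
        rw [← mul_one (log a), ← integral_comp_mul_left_Ioi' _ _ hL, smul_eq_mul,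
          ← integral_const_mul, mul_one]
        refine setIntegral_congr_fun measurableSet_Ioi fun t ht => ?_
        have : t ≠ 0 := by linarith [mem_Ioi.1 ht]
        field_simp

lemma integrableOn_rpow_neg_div_mul_log_Ioi {s a : ℝ} (hs : 0 < s) (ha : 1 < a) :
    IntegrableOn (fun x => x ^ (-s) / (x * log x)) (Ioi a) := by
  have hL : 0 < log a := log_pos ha
  have hmeas : Measurable fun x => x ^ (-s) / (x * log x) := by fun_prop
  refine ((integrableOn_Ioi_rpow_of_lt (by linarith : -s - 1 < -1) (by linarith)).const_mul
    (log a)⁻¹).mono' hmeas.aestronglyMeasurable ?_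
  filter_upwards [ae_restrict_mem measurableSet_Ioi] with x hx
  have hx0 : 0 < x := by linarith [mem_Ioi.1 hx]
  have hLx : log a ≤ log x := log_le_log (by linarith) (le_of_lt hx)
  have : 0 < log x := by linarith
  rw [norm_of_nonneg (by positivity), rpow_sub_one hx0.ne', ← div_div, inv_mul_eq_div]
  exact div_le_div_of_nonneg_left (by positivity) hL hLx

theorem stmt_16 (N : ℝ) (hN : 3 ≤ N) :
    let f : ℝ → ℝ := fun x => 1 / (x * Real.log x)
    let E₁ : ℝ → ℝ := fun u => ∫ t in Set.Ioi (1 : ℝ), Real.exp (-u * t) / t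
    let y : ℝ := 1 / Real.log N
    (∫ x in Set.Ioi N, x ^ ((5 : ℝ) / 2) * deriv (deriv (deriv f)) x)
      = -((33 / 4) * y + (11 / 2) * y ^ 2 + 2 * y ^ 3) / Real.sqrt N
        - (15 / 8) * E₁ ((1 / 2) * Real.log N) := by
  intro f E₁ y
  have hN1 : 1 < N := by linarith
  have hpointwise : EqOn (fun x => x ^ ((5 : ℝ) / 2) * deriv (deriv (deriv f)) x)
      (fun x => boundaryTermDeriv x - 15 / 8 * (x ^ (-(1 / 2) : ℝ) / (x * log x))) (Ioi N) :=
    fun x hx => rpow_mul_deriv_deriv_deriv_one_div_mul_log (by linarith [mem_Ioi.1 hx])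
      (log_pos (hN1.trans hx)).ne'
  rw [setIntegral_congr_fun measurableSet_Ioi hpointwise,
    integral_sub (integrableOn_boundaryTermDeriv hN1)
      ((integrableOn_rpow_neg_div_mul_log_Ioi (by norm_num) hN1).const_mul _),
    integral_const_mul, integral_Ioi_boundaryTermDeriv hN1,
    integral_rpow_neg_div_mul_log_Ioi _ hN1, boundaryTerm, neg_div]
end
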